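/- The lowering operator identity holds for A₁-type Macdonald polynomials: (x/(x² − 1))·(M_m(qx; q, t) − M_m(q⁻¹x; q, t)) = (q^m − q^{−m})·M_{m−1}(x; q, q·t) for all m ≥ 1. -/

import Mathlib

/-- The finite q-Pochhammer symbol `(a;q)_n = ∏_{j=0}^{n-1} (1 − a q^j)`. -/
noncomputable def qPoch (a q : ℂ) (n : ℕ) : ℂ := ∏ j ∈ Finset.range n, (1 - a * q ^ j)

/-- The `A₁`-type Macdonald polynomial. -/
noncomputable def macdonaldA1 (n : ℕ) (x q t : ℂ) : ℂ :=
  qPoch (q ^ 2) (q ^ 2) n / qPoch (t ^ 2) (q ^ 2) n *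
    ∑ j ∈ Finset.range (n + 1),
      qPoch (t ^ 2) (q ^ 2) j * qPoch (t ^ 2) (q ^ 2) (n - j) /
          (qPoch (q ^ 2) (q ^ 2) j * qPoch (q ^ 2) (q ^ 2) (n - j)) *
        x ^ ((j : ℤ) - ((n : ℤ) - (j : ℤ)))

/-!
Write `a = q²`, `T = t²` and `c_T(j, k)` for the coefficient of `x^(j-k)` in `M_{j+k}`, without
its prefactor. The q-shift multiplies it by `q^(j-k) - q^(k-j) = q^(-(j+k)) (a^j - a^k)`, and
`(1 - T)(a^k - a^j) = (1 - a^j)(1 - T a^k) - (1 - a^k)(1 - T a^j)`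
splits `(1 - T) c_T(j, k)(a^k - a^j)` into `(1 - T)² (c_{aT}(j - 1, k) - c_{aT}(j, k - 1))`.
Summed over `j + k = m` the difference therefore telescopes to `(x - x⁻¹)` times the sum for
`M_{m-1}(x; q, qt)`.
-/

open Finset

lemma qPoch_succ (a q : ℂ) (n : ℕ) : qPoch a q (n + 1) = qPoch a q n * (1 - a * q ^ n) :=
  prod_range_succ _ n

lemma qPoch_succ' (a q : ℂ) (n : ℕ) : qPoch a q (n + 1) = (1 - a) * qPoch (q * a) q n := by
  rw [qPoch, prod_range_succ', pow_zero, mul_one, mul_comm]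
  exact congrArg _ (prod_congr rfl fun i _ => by ring)

lemma qPoch_div_qPoch_succ (a T : ℂ) (n : ℕ) :
    qPoch a a (n + 1) / qPoch T a (n + 1) =
      (1 - a ^ (n + 1)) / (1 - T) * (qPoch a a n / qPoch (a * T) a n) := by
  rw [qPoch_succ, qPoch_succ', pow_succ', mul_comm (qPoch a a n), mul_div_mul_comm]

noncomputable def macdonaldCoeff (a T : ℂ) (j k : ℕ) : ℂ :=
  qPoch T a j * qPoch T a k / (qPoch a a j * qPoch a a k)

lemma macdonaldCoeff_comm (a T : ℂ) (j k : ℕ) : macdonaldCoeff a T j k = macdonaldCoeff a T k j := by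
  rw [macdonaldCoeff, macdonaldCoeff, mul_comm (qPoch T a j), mul_comm (qPoch a a j)]

lemma macdonaldCoeff_succ_left (a T : ℂ) (j k : ℕ) (ha : 1 - a ^ (j + 1) ≠ 0) :
    macdonaldCoeff a T (j + 1) k * (1 - a ^ (j + 1)) * (1 - T * a ^ k) =
      (1 - T) ^ 2 * macdonaldCoeff a (a * T) j k := by
  have hk : qPoch T a k * (1 - T * a ^ k) = (1 - T) * qPoch (a * T) a k := by
    rw [← qPoch_succ, qPoch_succ']
  rw [macdonaldCoeff, macdonaldCoeff, qPoch_succ' T a j, qPoch_succ a a j, ← pow_succ']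
  calc _ = (1 - T) * qPoch (a * T) a j * (qPoch T a k * (1 - T * a ^ k)) /
        (qPoch a a j * qPoch a a k) := by field_simp
    _ = _ := by rw [hk]; ring

lemma macdonaldCoeff_succ_right (a T : ℂ) (j k : ℕ) (ha : 1 - a ^ (k + 1) ≠ 0) :
    macdonaldCoeff a T j (k + 1) * (1 - a ^ (k + 1)) * (1 - T * a ^ j) =
      (1 - T) ^ 2 * macdonaldCoeff a (a * T) j k := by
  rw [macdonaldCoeff_comm, macdonaldCoeff_succ_left a T k j ha, macdonaldCoeff_comm]

noncomputable def macdonaldSum (a T x : ℂ) (n : ℕ) : ℂ :=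
  ∑ p ∈ antidiagonal n, macdonaldCoeff a T p.1 p.2 * x ^ ((p.1 : ℤ) - p.2)

lemma macdonaldA1_eq (n : ℕ) (x q t : ℂ) :
    macdonaldA1 n x q t =
      qPoch (q ^ 2) (q ^ 2) n / qPoch (t ^ 2) (q ^ 2) n * macdonaldSum (q ^ 2) (t ^ 2) x n := by
  rw [macdonaldA1, macdonaldSum, Nat.sum_antidiagonal_eq_sum_range_succ_mk]
  refine congrArg _ (sum_congr rfl fun j hj => ?_)
  rw [Nat.cast_sub (Nat.lt_succ_iff.mp (mem_range.mp hj)), macdonaldCoeff]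

lemma sum_antidiagonal_succ_sub {M : Type*} [AddCommGroup M] (n : ℕ) (f g : ℕ → ℕ → M)
    (hf : ∀ k, f 0 k = 0) (hg : ∀ j, g j 0 = 0) :
    ∑ p ∈ antidiagonal (n + 1), (f p.1 p.2 - g p.1 p.2) =
      ∑ p ∈ antidiagonal n, (f (p.1 + 1) p.2 - g p.1 (p.2 + 1)) := by
  rw [sum_sub_distrib, sum_sub_distrib, Nat.sum_antidiagonal_succ (f := fun p => f p.1 p.2),
    Nat.sum_antidiagonal_succ' (f := fun p => g p.1 p.2), hf, hg, zero_add, zero_add]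

lemma macdonaldSum_lowering (a T x : ℂ) (n : ℕ) (hx : x ≠ 0) (ha : ∀ k, 1 - a ^ (k + 1) ≠ 0)
    (hT : 1 - T ≠ 0) :
    ∑ p ∈ antidiagonal (n + 1), macdonaldCoeff a T p.1 p.2 * (a ^ p.1 - a ^ p.2) *
        x ^ ((p.1 : ℤ) - p.2) =
      (T - 1) * (x - x⁻¹) * macdonaldSum a (a * T) x n := by
  set f : ℕ → ℕ → ℂ := fun j k =>
    macdonaldCoeff a T j k * (1 - a ^ j) * (1 - T * a ^ k) * x ^ ((j : ℤ) - k)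
  set g : ℕ → ℕ → ℂ := fun j k =>
    macdonaldCoeff a T j k * (1 - a ^ k) * (1 - T * a ^ j) * x ^ ((j : ℤ) - k)
  have hshift : ∀ e : ℤ, x ^ (e + 1) - x ^ (e - 1) = (x - x⁻¹) * x ^ e := fun e => by
    rw [zpow_add_one₀ hx, zpow_sub_one₀ hx]; ring
  apply mul_left_cancel₀ hT
  calc (1 - T) * ∑ p ∈ antidiagonal (n + 1),
        macdonaldCoeff a T p.1 p.2 * (a ^ p.1 - a ^ p.2) * x ^ ((p.1 : ℤ) - p.2)
      = -∑ p ∈ antidiagonal (n + 1), (f p.1 p.2 - g p.1 p.2) := by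
        rw [mul_sum, ← sum_neg_distrib]
        exact sum_congr rfl fun p _ => by ring
    _ = -∑ p ∈ antidiagonal n, (f (p.1 + 1) p.2 - g p.1 (p.2 + 1)) := by
        rw [sum_antidiagonal_succ_sub n f g (fun k => by simp [f]) (fun j => by simp [g])]
    _ = -∑ p ∈ antidiagonal n, (1 - T) ^ 2 * macdonaldCoeff a (a * T) p.1 p.2 *
          (x ^ ((p.1 : ℤ) - p.2 + 1) - x ^ ((p.1 : ℤ) - p.2 - 1)) := by
        refine congrArg _ (sum_congr rfl fun p _ => ?_)
        have hleft : ((p.1 + 1 : ℕ) : ℤ) - p.2 = (p.1 : ℤ) - p.2 + 1 := by push_cast; ring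
        have hright : (p.1 : ℤ) - (p.2 + 1 : ℕ) = (p.1 : ℤ) - p.2 - 1 := by push_cast; ring
        simp only [f, g]
        rw [macdonaldCoeff_succ_left a T _ _ (ha p.1), macdonaldCoeff_succ_right a T _ _ (ha p.2),
          hleft, hright]
        ring
    _ = (1 - T) * ((T - 1) * (x - x⁻¹) * macdonaldSum a (a * T) x n) := by
        simp only [hshift, macdonaldSum, mul_sum, ← sum_neg_distrib]
        exact sum_congr rfl fun p _ => by ring

lemma pow_add_mul_zpow_sub {q : ℂ} (hq : q ≠ 0) (j k : ℕ) :
    q ^ (j + k) * q ^ ((j : ℤ) - k) = (q ^ 2) ^ j := by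
  rw [← zpow_natCast, ← zpow_add₀ hq, ← pow_mul, ← zpow_natCast]
  congr 1
  push_cast
  ring

lemma macdonaldSum_qShift_sub (q T x : ℂ) (n : ℕ) (hq : q ≠ 0) :
    q ^ n * (macdonaldSum (q ^ 2) T (q * x) n - macdonaldSum (q ^ 2) T (q⁻¹ * x) n) =
      ∑ p ∈ antidiagonal n, macdonaldCoeff (q ^ 2) T p.1 p.2 * ((q ^ 2) ^ p.1 - (q ^ 2) ^ p.2) *
        x ^ ((p.1 : ℤ) - p.2) := by
  rw [macdonaldSum, macdonaldSum, ← sum_sub_distrib, mul_sum]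
  refine sum_congr rfl fun p hp => ?_
  rw [← mem_antidiagonal.mp hp, ← pow_add_mul_zpow_sub hq p.1 p.2,
    ← pow_add_mul_zpow_sub hq p.2 p.1, add_comm p.2,
    mul_zpow, mul_zpow, inv_zpow', neg_sub]
  ring

theorem macdonaldA1_succ_sub (n : ℕ) (x q t : ℂ) (hx : x ≠ 0) (hq : q ≠ 0)
    (ha : ∀ k, 1 - (q ^ 2) ^ (k + 1) ≠ 0) (ht : 1 - t ^ 2 ≠ 0) :
    macdonaldA1 (n + 1) (q * x) q t - macdonaldA1 (n + 1) (q⁻¹ * x) q t =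
      (q ^ (n + 1) - (q ^ (n + 1))⁻¹) * (x - x⁻¹) * macdonaldA1 n x q (q * t) := by
  have hS := macdonaldSum_qShift_sub q (t ^ 2) x (n + 1) hq
  rw [macdonaldSum_lowering _ _ x n hx ha ht, ← eq_inv_mul_iff_mul_eq₀ (pow_ne_zero _ hq)] at hS
  rw [macdonaldA1_eq, macdonaldA1_eq, macdonaldA1_eq, ← mul_sub, hS, qPoch_div_qPoch_succ,
    mul_pow q t]
  field_simp
  ring

theorem macdonaldA1_lowering_general (m : ℕ) (hm : 1 ≤ m) (x q t : ℂ)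
    (hx0 : x ≠ 0) (hx1 : x ≠ 1) (hx2 : x ≠ -1) (hq0 : q ≠ 0)
    (hqp : ∀ k : ℕ, qPoch (q ^ 2) (q ^ 2) k ≠ 0)
    (htp : ∀ k : ℕ, qPoch (t ^ 2) (q ^ 2) k ≠ 0) :
    x / (x ^ 2 - 1) * (macdonaldA1 m (q * x) q t - macdonaldA1 m (q⁻¹ * x) q t) =
      (q ^ m - (q ^ m)⁻¹) * macdonaldA1 (m - 1) x q (q * t) := by
  obtain ⟨n, rfl⟩ := Nat.exists_eq_add_of_le' hm
  have hx21 : x ^ 2 - 1 ≠ 0 := by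
    rw [show x ^ 2 - 1 = (x - 1) * (x + 1) by ring]
    exact mul_ne_zero (sub_ne_zero.mpr hx1) (by rwa [Ne, add_eq_zero_iff_eq_neg])
  have ha : ∀ k, 1 - (q ^ 2) ^ (k + 1) ≠ 0 := fun k =>
    right_ne_zero_of_mul (by rw [pow_succ', ← qPoch_succ]; exact hqp (k + 1))
  have ht : 1 - t ^ 2 ≠ 0 := by simpa [qPoch] using htp 1
  rw [macdonaldA1_succ_sub n x q t hx0 hq0 ha ht, Nat.add_sub_cancel]
  field_simp

/-- Lowering operator identity with parameter shift for `A₁`-type Macdonald polynomials: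
`(x/(x² − 1))·(M_m(qx;q,t) − M_m(q⁻¹x;q,t)) = (q^m − q^{−m})·M_{m−1}(x;q,qt)` for `m ≥ 1`. -/
theorem macdonaldA1_lowering (m : ℕ) (hm : 1 ≤ m) (x q t : ℂ)
    (hx0 : x ≠ 0) (hx1 : x ≠ 1) (hx2 : x ≠ -1) (hq0 : q ≠ 0) (ht0 : t ≠ 0)
    (hqp : ∀ k : ℕ, qPoch (q ^ 2) (q ^ 2) k ≠ 0)
    (htp : ∀ k : ℕ, qPoch (t ^ 2) (q ^ 2) k ≠ 0)
    (htp' : ∀ k : ℕ, qPoch ((q * t) ^ 2) (q ^ 2) k ≠ 0) :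
    x / (x ^ 2 - 1) * (macdonaldA1 m (q * x) q t - macdonaldA1 m (q⁻¹ * x) q t) =
      (q ^ m - (q ^ m)⁻¹) * macdonaldA1 (m - 1) x q (q * t) :=
  macdonaldA1_lowering_general m hm x q t hx0 hx1 hx2 hq0 hqp htp
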